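/- arXiv:1305.1792 — 2 statements merged into one kernel-verified Lean document; each statement's English description precedes it below -/
import Mathlib

section
/- Counting Lemma: With A ∈ 𝔄_-^even, H_± ∈ 𝔄_±^even, and Y_{ℓ_1,…,ℓ_k} = ∏_{i=1}^k [C_{𝔍_{ℓ_i}} ϑ(C_{𝔍_{ℓ_i}}) e^{-H_- /k} e^{-ϑ(H_-)/k}], the trace Tr(A ϑ(A) Y_{ℓ_1,…,ℓ_k}) vanishes unless Σ_{i=1}^k |𝔍_{ℓ_i}| is even; and in that case Σ_{i=1}^k σ(𝔍_{ℓ_i}) ≡ 0 mod 2. -/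
open Matrix
open scoped ComplexOrder

noncomputable section

/-- The ordered Majorana monomial `M_β = c_{i₁} c_{i₂} ⋯ c_{i_k}` associated to the
subset `β = {i₁ < i₂ < ⋯ < i_k}` of sites. -/
def cliffordMonomial {m d : ℕ} (c : Fin m → Matrix (Fin d) (Fin d) ℂ)
    (β : Finset (Fin m)) : Matrix (Fin d) (Fin d) ℂ :=
  ((β.sort (· ≤ ·)).map c).prod

/-- The matrix exponential. -/
def mexp {d : ℕ} (A : Matrix (Fin d) (Fin d) ℂ) : Matrix (Fin d) (Fin d) ℂ :=
  NormedSpace.exp A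

/-- The even subalgebra `𝔄(B)^even`: the subalgebra generated by products of
two Majoranas at sites in `B` (equivalently, by even monomials). -/
def evenAlgebra {m d : ℕ} (c : Fin m → Matrix (Fin d) (Fin d) ℂ)
    (B : Finset (Fin m)) : Subalgebra ℂ (Matrix (Fin d) (Fin d) ℂ) :=
  Algebra.adjoin ℂ {x | ∃ i ∈ B, ∃ j ∈ B, x = c i * c j}

/-- The full subalgebra `𝔄(B)` generated by the Majoranas at sites in `B`. -/
def majoranaAlgebra {m d : ℕ} (c : Fin m → Matrix (Fin d) (Fin d) ℂ)
    (B : Finset (Fin m)) : Subalgebra ℂ (Matrix (Fin d) (Fin d) ℂ) :=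
  Algebra.adjoin ℂ (c '' ↑B)

/-! For a set `T` of sites, `C_T c_j C_T⁻¹ = (-1)^(|T| + [j ∈ T]) c_j`. Taking `T = Λ₋` when
`|Λ₋|` is even and `T` the complement of `Λ₋` otherwise (then `|T|` is odd, the number `2N` of
sites being even), conjugation by `C_T` negates the Majoranas at sites of `Λ₋` and fixes all
others. It therefore fixes `𝔄₋^even` and, since `ϑ` carries `Λ₋` into `Λ₊`, everything in
`ϑ(𝔄₋)`; it commutes with the exponential and multiplies `C_𝔍` by `(-1)^|𝔍|`. So it multiplies
`A ϑ(A) Y` by `(-1)^(Σᵢ |𝔍ᵢ|)`, and as the trace is invariant under conjugation, the trace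
vanishes when that sum is odd. -/

section Clifford

variable {m d : ℕ} {c : Fin m → Matrix (Fin d) (Fin d) ℂ}

lemma clifford_mul_self
    (hClif : ∀ i j, c i * c j + c j * c i = if i = j then (2 : ℂ) • 1 else 0) (i : Fin m) :
    c i * c i = 1 := by
  have h := hClif i i
  rw [if_pos rfl, ← two_smul ℂ] at h
  exact smul_right_injective _ two_ne_zero h

lemma clifford_anticomm
    (hClif : ∀ i j, c i * c j + c j * c i = if i = j then (2 : ℂ) • 1 else 0) {i j : Fin m}
    (hij : i ≠ j) : c i * c j = -(c j * c i) := by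
  have h := hClif i j
  rw [if_neg hij] at h
  exact eq_neg_of_add_eq_zero_left h

lemma list_prod_map_mul_clifford
    (hClif : ∀ i j, c i * c j + c j * c i = if i = j then (2 : ℂ) • 1 else 0) (j : Fin m) :
    ∀ l : List (Fin m),
      (l.map c).prod * c j = (-1 : ℂ) ^ (l.count j + l.length) • (c j * (l.map c).prod)
  | [] => by simp
  | a :: t => by
    have ih := list_prod_map_mul_clifford hClif j t
    simp only [List.map_cons, List.prod_cons, List.length_cons]
    rw [mul_assoc, ih, mul_smul_comm, ← mul_assoc, ← mul_assoc]
    by_cases haj : a = j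
    · subst haj
      rw [List.count_cons_self, show t.count a + 1 + (t.length + 1) = t.count a + t.length + 2 by
        omega, pow_add (-1 : ℂ) _ 2, neg_one_sq, mul_one]
    · rw [clifford_anticomm hClif haj, List.count_cons_of_ne haj, ← add_assoc, pow_succ,
        mul_neg_one, neg_smul, neg_mul, smul_neg]

lemma cliffordMonomial_mul_majorana
    (hClif : ∀ i j, c i * c j + c j * c i = if i = j then (2 : ℂ) • 1 else 0)
    (T : Finset (Fin m)) (j : Fin m) :
    cliffordMonomial c T * c j
      = (-1 : ℂ) ^ ((if j ∈ T then 1 else 0) + T.card) • (c j * cliffordMonomial c T) := by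
  have hcount : (T.sort (· ≤ ·)).count j = if j ∈ T then 1 else 0 := by
    split_ifs with hj
    · exact List.count_eq_one_of_mem (T.sort_nodup _) ((Finset.mem_sort _).mpr hj)
    · exact List.count_eq_zero_of_not_mem (mt (Finset.mem_sort _).mp hj)
  rw [cliffordMonomial, list_prod_map_mul_clifford hClif, hcount, Finset.length_sort]

end Clifford

lemma map_prod_ofFn_of_map_eq_neg_one_pow_mul {M F : Type*} [Monoid M] [HasDistribNeg M]
    [FunLike F M M] [MonoidHomClass F M M] (φ : F) :
    ∀ {k : ℕ} (n : Fin k → ℕ) (f : Fin k → M), (∀ i, φ (f i) = (-1) ^ n i * f i) →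
      φ (List.ofFn f).prod = (-1) ^ (∑ i, n i) * (List.ofFn f).prod
  | 0, _, _, _ => by simp
  | k + 1, n, f, h => by
    rw [List.ofFn_succ, List.prod_cons, map_mul, h,
      map_prod_ofFn_of_map_eq_neg_one_pow_mul φ _ _ fun i => h i.succ, Fin.sum_univ_succ,
      pow_add, mul_assoc, mul_assoc, ← ((Commute.neg_one_left (f 0)).pow_left _).left_comm]

section Conjugation

variable {d : ℕ}

def unitsConjAlgEquiv (u : (Matrix (Fin d) (Fin d) ℂ)ˣ) :
    Matrix (Fin d) (Fin d) ℂ ≃ₐ[ℂ] Matrix (Fin d) (Fin d) ℂ :=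
  MulSemiringAction.toAlgEquiv ℂ _ (ConjAct.toConjAct u)

lemma unitsConjAlgEquiv_apply (u : (Matrix (Fin d) (Fin d) ℂ)ˣ) (M : Matrix (Fin d) (Fin d) ℂ) :
    unitsConjAlgEquiv u M = u * M * (↑u⁻¹ : Matrix (Fin d) (Fin d) ℂ) :=
  ConjAct.units_smul_def _ M

lemma unitsConjAlgEquiv_mexp (u : (Matrix (Fin d) (Fin d) ℂ)ˣ) (M : Matrix (Fin d) (Fin d) ℂ) :
    unitsConjAlgEquiv u (mexp M) = mexp (unitsConjAlgEquiv u M) := by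
  rw [unitsConjAlgEquiv_apply, unitsConjAlgEquiv_apply, mexp, mexp, Matrix.exp_units_conj]

lemma trace_eq_zero_of_unitsConjAlgEquiv_eq_neg {u : (Matrix (Fin d) (Fin d) ℂ)ˣ}
    {M : Matrix (Fin d) (Fin d) ℂ} (h : unitsConjAlgEquiv u M = -M) : M.trace = 0 := by
  have htr := Matrix.trace_units_conj u M
  rw [← unitsConjAlgEquiv_apply, h, trace_neg] at htr
  exact CharZero.eq_neg_self_iff.mp htr.symm

end Conjugation

section Grading

variable {m d : ℕ} {c : Fin m → Matrix (Fin d) (Fin d) ℂ}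

lemma isUnit_cliffordMonomial
    (hClif : ∀ i j, c i * c j + c j * c i = if i = j then (2 : ℂ) • 1 else 0)
    (T : Finset (Fin m)) : IsUnit (cliffordMonomial c T) :=
  List.prod_isUnit fun _ hx => by
    obtain ⟨i, -, rfl⟩ := List.mem_map.mp hx
    exact ⟨⟨c i, c i, clifford_mul_self hClif i, clifford_mul_self hClif i⟩, rfl⟩

lemma exists_unitsConjAlgEquiv_majorana_eq_ite (hm : Even m)
    (hClif : ∀ i j, c i * c j + c j * c i = if i = j then (2 : ℂ) • 1 else 0)
    (Λ : Finset (Fin m)) :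
    ∃ u, ∀ j, unitsConjAlgEquiv u (c j) = if j ∈ Λ then -c j else c j := by
  set T := if Even Λ.card then Λ else Λᶜ
  have hsign : ∀ j, (-1 : ℂ) ^ ((if j ∈ T then 1 else 0) + T.card) = if j ∈ Λ then -1 else 1 := by
    intro j
    by_cases hΛ : Even Λ.card
    · simp only [T, if_pos hΛ]
      split_ifs
      · exact (hΛ.one_add).neg_one_pow
      · simpa using hΛ.neg_one_pow
    · have hc : Odd Λᶜ.card := by
        rw [Finset.card_compl, Fintype.card_fin]
        exact Nat.Even.sub_odd (Finset.card_le_univ Λ |>.trans_eq (Fintype.card_fin m)) hm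
          (Nat.not_even_iff_odd.mp hΛ)
      simp only [T, if_neg hΛ, Finset.mem_compl]
      split_ifs
      · simpa using hc.neg_one_pow
      · exact (hc.one_add).neg_one_pow
  obtain ⟨u, hu⟩ := isUnit_cliffordMonomial hClif T
  refine ⟨u, fun j => ?_⟩
  have hcomm : (u : Matrix (Fin d) (Fin d) ℂ) * c j
      = (if j ∈ Λ then -1 else 1 : ℂ) • (c j * u) := by
    rw [hu, cliffordMonomial_mul_majorana hClif, hsign]
  rw [unitsConjAlgEquiv_apply, hcomm, smul_mul_assoc, mul_assoc, Units.mul_inv, mul_one]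
  split_ifs <;> simp

end Grading

section Subalgebras

variable {m d : ℕ} {c : Fin m → Matrix (Fin d) (Fin d) ℂ}

lemma evenAlgebra_le_majoranaAlgebra (Λ : Finset (Fin m)) :
    evenAlgebra c Λ ≤ majoranaAlgebra c Λ :=
  Algebra.adjoin_le <| by
    rintro _ ⟨i, hi, j, hj, rfl⟩
    exact mul_mem (Algebra.subset_adjoin ⟨i, hi, rfl⟩) (Algebra.subset_adjoin ⟨j, hj, rfl⟩)

lemma cliffordMonomial_mem_majoranaAlgebra {J Λ : Finset (Fin m)} (hJ : J ⊆ Λ) :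
    cliffordMonomial c J ∈ majoranaAlgebra c Λ :=
  Subalgebra.list_prod_mem _ fun _ hx => by
    obtain ⟨i, hi, rfl⟩ := List.mem_map.mp hx
    exact Algebra.subset_adjoin ⟨i, hJ ((Finset.mem_sort _).mp hi), rfl⟩

variable (φ : Matrix (Fin d) (Fin d) ℂ →ₐ[ℂ] Matrix (Fin d) (Fin d) ℂ)

lemma AlgHom.map_eq_self_of_mem_evenAlgebra {Λ : Finset (Fin m)}
    (hφ : ∀ j ∈ Λ, φ (c j) = -c j) {z : Matrix (Fin d) (Fin d) ℂ} (hz : z ∈ evenAlgebra c Λ) :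
    φ z = z :=
  AlgHom.adjoin_le_equalizer φ (AlgHom.id ℂ _) (by
    rintro _ ⟨i, hi, j, hj, rfl⟩
    simp [hφ i hi, hφ j hj]) hz

lemma AlgHom.map_eq_self_of_mem_majoranaAlgebra {S : Finset (Fin m)}
    (hφ : ∀ j ∈ S, φ (c j) = c j) {z : Matrix (Fin d) (Fin d) ℂ}
    (hz : z ∈ majoranaAlgebra c S) : φ z = z :=
  AlgHom.adjoin_le_equalizer φ (AlgHom.id ℂ _) (by
    rintro _ ⟨j, hj, rfl⟩
    exact hφ j hj) hz

lemma AlgHom.map_cliffordMonomial_of_map_eq_neg {J : Finset (Fin m)}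
    (hφ : ∀ j ∈ J, φ (c j) = -c j) :
    φ (cliffordMonomial c J) = (-1) ^ J.card * cliffordMonomial c J := by
  have hmap : (J.sort (· ≤ ·)).map (φ ∘ c) = ((J.sort (· ≤ ·)).map c).map Neg.neg := by
    rw [List.map_map]
    exact List.map_congr_left fun j hj => hφ j ((Finset.mem_sort _).mp hj)
  rw [cliffordMonomial, map_list_prod, List.map_map, hmap, List.prod_map_neg, List.length_map,
    Finset.length_sort]

end Subalgebras

section Reflection

variable {m d : ℕ} {c : Fin m → Matrix (Fin d) (Fin d) ℂ}
  {θ : Matrix (Fin d) (Fin d) ℂ → Matrix (Fin d) (Fin d) ℂ} {ρ : Fin m → Fin m}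

lemma map_one_of_map_majorana
    (hClif : ∀ i j, c i * c j + c j * c i = if i = j then (2 : ℂ) • 1 else 0)
    (hθmul : ∀ A B, θ (A * B) = θ A * θ B) (hθc : ∀ j, θ (c j) = c (ρ j)) (j : Fin m) :
    θ 1 = 1 := by
  conv_lhs => rw [← clifford_mul_self hClif j]
  rw [hθmul, hθc, clifford_mul_self hClif]

lemma map_mem_majoranaAlgebra
    (hθadd : ∀ A B, θ (A + B) = θ A + θ B)
    (hθsmul : ∀ (z : ℂ) A, θ (z • A) = (starRingEnd ℂ) z • θ A)
    (hθmul : ∀ A B, θ (A * B) = θ A * θ B) (hθ1 : θ 1 = 1) (hθc : ∀ j, θ (c j) = c (ρ j))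
    {Λ S : Finset (Fin m)} (hρ : ∀ j ∈ Λ, ρ j ∈ S) {z : Matrix (Fin d) (Fin d) ℂ}
    (hz : z ∈ majoranaAlgebra c Λ) : θ z ∈ majoranaAlgebra c S := by
  induction hz using Algebra.adjoin_induction with
  | mem x hx =>
    obtain ⟨j, hj, rfl⟩ := hx
    rw [hθc]
    exact Algebra.subset_adjoin ⟨ρ j, hρ j hj, rfl⟩
  | algebraMap r =>
    rw [Algebra.algebraMap_eq_smul_one, hθsmul, hθ1]
    exact Subalgebra.smul_mem _ (one_mem _) _
  | add x y _ _ hx hy => rw [hθadd]; exact add_mem hx hy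
  | mul x y _ _ hx hy => rw [hθmul]; exact mul_mem hx hy

end Reflection

theorem counting_lemma_general
    (N : ℕ) (c : Fin (2 * N) → Matrix (Fin (2 ^ N)) (Fin (2 ^ N)) ℂ)
    (hClif : ∀ i j, c i * c j + c j * c i = if i = j then (2 : ℂ) • 1 else 0)
    (Λm Λp : Finset (Fin (2 * N))) (hdisj : Disjoint Λm Λp)
    (ρ : Equiv.Perm (Fin (2 * N)))
    (hρm : ∀ j ∈ Λm, ρ j ∈ Λp)
    (θ : Matrix (Fin (2 ^ N)) (Fin (2 ^ N)) ℂ → Matrix (Fin (2 ^ N)) (Fin (2 ^ N)) ℂ)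
    (hθadd : ∀ A B, θ (A + B) = θ A + θ B)
    (hθsmul : ∀ (z : ℂ) A, θ (z • A) = (starRingEnd ℂ) z • θ A)
    (hθmul : ∀ A B, θ (A * B) = θ A * θ B)
    (hθc : ∀ j, θ (c j) = c (ρ j))
    (Hm : Matrix (Fin (2 ^ N)) (Fin (2 ^ N)) ℂ)
    (hHm : Hm ∈ evenAlgebra c Λm)
    (k : ℕ) (𝔍 : Fin k → Finset (Fin (2 * N))) (h𝔍 : ∀ i, 𝔍 i ⊆ Λm)
    (A : Matrix (Fin (2 ^ N)) (Fin (2 ^ N)) ℂ) (hA : A ∈ evenAlgebra c Λm) :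
    (¬ Even (∑ i, (𝔍 i).card) →
      Matrix.trace (A * θ A * (List.ofFn fun i : Fin k =>
        cliffordMonomial c (𝔍 i) * θ (cliffordMonomial c (𝔍 i)) *
          mexp (-((k : ℂ)⁻¹ • Hm)) * mexp (-((k : ℂ)⁻¹ • θ Hm))).prod) = 0) ∧
    (Even (∑ i, (𝔍 i).card) → (∑ i, (𝔍 i).card % 2) % 2 = 0) := by
  refine ⟨fun hodd => ?_, fun heven => by rw [← Finset.sum_nat_mod]; exact Nat.even_iff.mp heven⟩
  obtain ⟨i₀, -, hi₀⟩ := Finset.exists_ne_zero_of_sum_ne_zero fun h => hodd (h ▸ Even.zero)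
  obtain ⟨j₀, -⟩ := Finset.card_ne_zero.mp hi₀
  have hθmem {z} : z ∈ majoranaAlgebra c Λm → θ z ∈ majoranaAlgebra c Λmᶜ :=
    map_mem_majoranaAlgebra hθadd hθsmul hθmul (map_one_of_map_majorana hClif hθmul hθc j₀) hθc
      fun j hj => Finset.mem_compl.mpr (Finset.disjoint_right.mp hdisj (hρm j hj))
  obtain ⟨u, hu⟩ := exists_unitsConjAlgEquiv_majorana_eq_ite (even_two_mul N) hClif Λm
  set φ := (unitsConjAlgEquiv u).toAlgHom
  have hφ_neg : ∀ j ∈ Λm, φ (c j) = -c j := fun j hj => by simp [φ, hu, hj]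
  have hfix_even {z} : z ∈ evenAlgebra c Λm → φ z = z := φ.map_eq_self_of_mem_evenAlgebra hφ_neg
  have hfix_compl {z} : z ∈ majoranaAlgebra c Λmᶜ → φ z = z :=
    φ.map_eq_self_of_mem_majoranaAlgebra fun j hj => by simp [φ, hu, Finset.mem_compl.mp hj]
  have hfix_mexp {M} (hM : φ M = M) : φ (mexp M) = mexp M :=
    (unitsConjAlgEquiv_mexp u M).trans (congrArg mexp hM)
  set E₁ := mexp (-((k : ℂ)⁻¹ • Hm))
  set E₂ := mexp (-((k : ℂ)⁻¹ • θ Hm))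
  have hE₁ : φ E₁ = E₁ := hfix_mexp (hfix_even (neg_mem (Subalgebra.smul_mem _ hHm _)))
  have hE₂ : φ E₂ = E₂ := hfix_mexp <| hfix_compl <|
    neg_mem (Subalgebra.smul_mem _ (hθmem (evenAlgebra_le_majoranaAlgebra _ hHm)) _)
  have hfactor (i) : φ (cliffordMonomial c (𝔍 i) * θ (cliffordMonomial c (𝔍 i)) * E₁ * E₂) =
      (-1) ^ (𝔍 i).card * (cliffordMonomial c (𝔍 i) * θ (cliffordMonomial c (𝔍 i)) * E₁ * E₂) := by
    rw [map_mul, map_mul, map_mul, hE₁, hE₂,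
      φ.map_cliffordMonomial_of_map_eq_neg fun j hj => hφ_neg j (h𝔍 i hj),
      hfix_compl (hθmem (cliffordMonomial_mem_majoranaAlgebra (h𝔍 i)))]
    simp only [mul_assoc]
  have hprod := map_prod_ofFn_of_map_eq_neg_one_pow_mul φ _ _ hfactor
  rw [(Nat.not_even_iff_odd.mp hodd).neg_one_pow, neg_one_mul] at hprod
  apply trace_eq_zero_of_unitsConjAlgEquiv_eq_neg (u := u)
  change φ _ = _
  rw [map_mul, map_mul, hfix_even hA, hfix_compl (hθmem (evenAlgebra_le_majoranaAlgebra _ hA)),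
    hprod, mul_neg]

/-- Counting lemma: with `A ∈ 𝔄₋ᵉᵛᵉⁿ` and
`Y = ∏ᵢ C_(𝔍ᵢ) ϑ(C_(𝔍ᵢ)) e^(-H₋/k) e^(-ϑ(H₋)/k)`, the trace `Tr(A ϑ(A) Y)`
vanishes unless `Σᵢ |𝔍ᵢ|` is even, in which case `Σᵢ σ(𝔍ᵢ) ≡ 0 mod 2`. -/
theorem counting_lemma
    (N : ℕ) (c : Fin (2 * N) → Matrix (Fin (2 ^ N)) (Fin (2 ^ N)) ℂ)
    (hClif : ∀ i j, c i * c j + c j * c i = if i = j then (2 : ℂ) • 1 else 0)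
    (hSA : ∀ i, (c i)ᴴ = c i)
    (Λm Λp : Finset (Fin (2 * N))) (hdisj : Disjoint Λm Λp)
    (hunion : Λm ∪ Λp = Finset.univ)
    (ρ : Equiv.Perm (Fin (2 * N))) (hρ : ∀ j, ρ (ρ j) = j)
    (hρm : ∀ j ∈ Λm, ρ j ∈ Λp)
    (θ : Matrix (Fin (2 ^ N)) (Fin (2 ^ N)) ℂ → Matrix (Fin (2 ^ N)) (Fin (2 ^ N)) ℂ)
    (hθadd : ∀ A B, θ (A + B) = θ A + θ B)
    (hθsmul : ∀ (z : ℂ) A, θ (z • A) = (starRingEnd ℂ) z • θ A)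
    (hθmul : ∀ A B, θ (A * B) = θ A * θ B)
    (hθstar : ∀ A, θ Aᴴ = (θ A)ᴴ)
    (hθtr : ∀ A, Matrix.trace (θ A) = (starRingEnd ℂ) (Matrix.trace A))
    (hθc : ∀ j, θ (c j) = c (ρ j))
    (Hm : Matrix (Fin (2 ^ N)) (Fin (2 ^ N)) ℂ)
    (hHm : Hm ∈ evenAlgebra c Λm) (hHmsa : Hmᴴ = Hm)
    (k : ℕ) (𝔍 : Fin k → Finset (Fin (2 * N))) (h𝔍 : ∀ i, 𝔍 i ⊆ Λm)
    (A : Matrix (Fin (2 ^ N)) (Fin (2 ^ N)) ℂ) (hA : A ∈ evenAlgebra c Λm) :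
    (¬ Even (∑ i, (𝔍 i).card) →
      Matrix.trace (A * θ A * (List.ofFn fun i : Fin k =>
        cliffordMonomial c (𝔍 i) * θ (cliffordMonomial c (𝔍 i)) *
          mexp (-((k : ℂ)⁻¹ • Hm)) * mexp (-((k : ℂ)⁻¹ • θ Hm))).prod) = 0) ∧
    (Even (∑ i, (𝔍 i).card) → (∑ i, (𝔍 i).card % 2) % 2 = 0) :=
  counting_lemma_general N c hClif Λm Λp hdisj ρ hρm θ hθadd hθsmul hθmul hθc Hm hHm k 𝔍 h𝔍 A hA
end
end

section
/- Sign Identity Lemma: Suppose Σ_{i=1}^k n_{ℓ_i} = 2𝔑 is even, where n_{ℓ_i} = |𝔍_{ℓ_i}|. Then Y_{ℓ_1,…,ℓ_k} = i^{-Σ_i σ(𝔍_{ℓ_i})} D ϑ(D), where D = C_{𝔍_{ℓ_1}} e^{-H_- /k} C_{𝔍_{ℓ_2}} e^{-H_- /k} ⋯ C_{𝔍_{ℓ_k}} e^{-H_- /k} ∈ 𝔄_- and Y_{ℓ_1,…,ℓ_k} = ∏_{i=1}^k [C_{𝔍_{ℓ_i}} ϑ(C_{𝔍_{ℓ_i}})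 e^{-H_- /k} e^{-ϑ(H_-)/k}]. -/
/-!
Write `Aᵢ = C_{𝔍ᵢ}`, `Bᵢ = ϑ(Aᵢ)` and `E = e^{-H₋/k}`, so that `ϑ(E) = e^{-ϑ(H₋)/k}`. Majoranas
on `Λ₋` anticommute with those on `Λ₊`, hence the even elements `H₋` and `ϑ(H₋)` commute with every
Majorana of the other side: `Bᵢ` commutes with `E`, `ϑ(E)` with `Aⱼ` and `E` with `ϑ(E)`, while
`Bᵢ Aⱼ = (-1)^{nᵢ nⱼ} Aⱼ Bᵢ`. Moving every `Bᵢ ϑ(E)` to the right of all `Aⱼ E` turns `Y` into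
`(-1)^{e₂(n)} D ϑ(D)`, where `e₂(n) = Σ_{i<j} nᵢ nⱼ`. Finally `2 e₂(n) = (Σ nᵢ)² - Σ nᵢ²`, the first
square is divisible by `4` because `Σ nᵢ` is even, and `nᵢ² ≡ nᵢ mod 2 (mod 4)`, so
`(-1)^{e₂(n)} = i^{2 e₂(n)} = i^{-Σ (nᵢ mod 2)}`.
-/

open Matrix
open scoped ComplexOrder

noncomputable section

namespace Multiset

variable {R : Type*} [CommSemiring R]

theorem esymm_one (s : Multiset R) : s.esymm 1 = s.sum := by
  simp [esymm, powersetCard_one]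

theorem esymm_cons (a : R) (s : Multiset R) (n : ℕ) :
    (a ::ₘ s).esymm (n + 1) = s.esymm (n + 1) + a * s.esymm n := by
  simp [esymm, powersetCard_cons, map_map, sum_map_mul_left]

theorem two_mul_esymm_two_add_sum_map_sq (s : Multiset R) :
    2 * s.esymm 2 + (s.map (· ^ 2)).sum = s.sum ^ 2 := by
  induction s using Multiset.induction_on with
  | empty => simp [esymm, powersetCard_zero_right]
  | cons a s ih =>
    rw [esymm_cons, esymm_one, map_cons, sum_cons, sum_cons, add_sq', ← ih]
    ring

end Multiset

namespace Complex

theorem I_pow_sq (n : ℕ) : I ^ (n ^ 2) = I ^ (n % 2) := by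
  obtain ⟨m, rfl | rfl⟩ := Nat.even_or_odd' n
  · rw [show (2 * m) ^ 2 = 4 * m ^ 2 by ring, pow_mul, I_pow_four]
    simp
  · rw [show (2 * m + 1) ^ 2 = 4 * (m ^ 2 + m) + 1 by ring, pow_add, pow_mul, I_pow_four]
    simp [Nat.add_mod]

theorem I_pow_sum_map_sq (s : Multiset ℕ) :
    I ^ (s.map (· ^ 2)).sum = I ^ (s.map (· % 2)).sum := by
  induction s using Multiset.induction_on with
  | empty => rfl
  | cons a s ih => simp only [Multiset.map_cons, Multiset.sum_cons, pow_add, ih, I_pow_sq]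

theorem neg_one_pow_esymm_two {s : Multiset ℕ} (hs : Even s.sum) :
    (-1 : ℂ) ^ s.esymm 2 = I ^ (-(((s.map (· % 2)).sum : ℕ) : ℤ)) := by
  obtain ⟨m, hm⟩ := hs
  have hsum : I ^ (2 * s.esymm 2) * I ^ (s.map (· ^ 2)).sum = 1 := by
    rw [← pow_add, s.two_mul_esymm_two_add_sum_map_sq, hm, show (m + m) ^ 2 = 4 * m ^ 2 by ring,
      pow_mul, I_pow_four, one_pow]
  rw [pow_mul, I_sq] at hsum
  rw [eq_inv_of_mul_eq_one_left hsum, I_pow_sum_map_sq, _root_.zpow_neg, zpow_natCast]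

end Complex

section

variable {R ι : Type*} [Ring R]

def SignCommute (n : ℕ) (a b : R) : Prop :=
  a * b = (-1 : ℤ) ^ n • (b * a)

variable {m n : ℕ} {a b c : R}

theorem signCommute_zero : SignCommute 0 a b ↔ Commute a b := by
  simp [SignCommute, Commute, SemiconjBy]

theorem signCommute_one : SignCommute 1 a b ↔ a * b + b * a = 0 := by
  simp [SignCommute, eq_neg_iff_add_eq_zero]

namespace SignCommute

theorem commute_of_even (h : SignCommute n a b) (hn : Even n) : Commute a b := by
  rw [SignCommute, hn.neg_one_pow, one_smul] at h
  exact h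

theorem symm (h : SignCommute n a b) : SignCommute n b a := by
  rw [SignCommute, h, smul_smul, ← mul_pow]
  simp

theorem mul_right (hb : SignCommute m a b) (hc : SignCommute n a c) :
    SignCommute (m + n) a (b * c) := by
  rw [SignCommute, ← mul_assoc, hb, smul_mul_assoc, mul_assoc, hc, mul_smul_comm, smul_smul,
    ← pow_add, mul_assoc]

theorem mul_left (ha : SignCommute m a c) (hb : SignCommute n b c) :
    SignCommute (m + n) (a * b) c :=
  (ha.symm.mul_right hb.symm).symm

theorem mul_mul_of_commute {e f : R} (h : SignCommute n b a) (hbe : Commute b e)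
    (hfa : Commute f a) (hfe : Commute f e) :
    SignCommute n (b * f) (a * e) := by
  simpa using (h.mul_right (signCommute_zero.mpr hbe)).mul_left
    ((signCommute_zero.mpr hfa).mul_right (signCommute_zero.mpr hfe))

theorem list_prod_right (l : List ι) (x : ι → R) (f : ι → ℕ)
    (h : ∀ i ∈ l, SignCommute (f i) a (x i)) :
    SignCommute (l.map f).sum a (l.map x).prod := by
  induction l with
  | nil => simp [signCommute_zero]
  | cons i l ih =>
    simpa using (h i (by simp)).mul_right (ih fun j hj => h j (by simp [hj]))

theorem list_prod_left (l : List ι) (x : ι → R) (f : ι → ℕ)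
    (h : ∀ i ∈ l, SignCommute (f i) (x i) b) :
    SignCommute (l.map f).sum (l.map x).prod b :=
  (list_prod_right l x f fun i hi => (h i hi).symm).symm

end SignCommute

theorem List.prod_map_mul_of_signCommute (l : List ι) (a b : ι → R) (n : ι → ℕ)
    (h : ∀ i j, SignCommute (n i * n j) (b i) (a j)) :
    (l.map fun i => a i * b i).prod =
      (-1 : ℤ) ^ (↑(l.map n) : Multiset ℕ).esymm 2 • ((l.map a).prod * (l.map b).prod) := by
  induction l with
  | nil => simp [Multiset.esymm, Multiset.powersetCard_zero_right]
  | cons i l ih =>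
    have hb : SignCommute (n i * (l.map n).sum) (b i) (l.map a).prod := by
      simpa [List.sum_map_mul_left] using
        SignCommute.list_prod_right l a (fun j => n i * n j) fun j _ => h i j
    rw [List.map_cons (f := n), ← Multiset.cons_coe, Multiset.esymm_cons, Multiset.esymm_one,
      Multiset.sum_coe, pow_add]
    simp only [List.map_cons, List.prod_cons, ih, mul_smul_comm, mul_assoc]
    rw [← mul_assoc (b i), hb, smul_mul_assoc, mul_smul_comm, smul_smul, mul_comm, mul_assoc]

theorem List.prod_ofFn_mul_map_of_signCommute {k : ℕ} (Θ : R →+* R)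
    (M : Fin k → R) (E : R) (n : Fin k → ℕ)
    (hM : ∀ i j, SignCommute (n i * n j) (Θ (M i)) (M j)) (hME : ∀ i, Commute (Θ (M i)) E)
    (hEM : ∀ j, Commute (Θ E) (M j)) (hE : Commute (Θ E) E) :
    (List.ofFn fun i => M i * Θ (M i) * E * Θ E).prod =
      (-1 : ℤ) ^ (Finset.univ.val.map n).esymm 2 •
        ((List.ofFn fun i => M i * E).prod * Θ (List.ofFn fun i => M i * E).prod) := by
  have hfactor : ∀ i, M i * Θ (M i) * E * Θ E = M i * E * (Θ (M i) * Θ E) := fun i => by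
    rw [mul_assoc (M i), (hME i).eq]
    simp only [mul_assoc]
  simp only [hfactor, map_list_prod, List.ofFn_eq_map, List.map_map, Function.comp_def, map_mul,
    Fin.univ_val_map]
  exact List.prod_map_mul_of_signCommute _ _ _ _ fun i j =>
    (hM i j).mul_mul_of_commute (hME i) (hEM j) hE

end

theorem Matrix.eq_one_of_isIdempotentElem_of_trace_eq {n K : Type*} [Fintype n] [DecidableEq n]
    [Field K] [CharZero K] {P : Matrix n n K} (hP : IsIdempotentElem P)
    (htr : P.trace = Fintype.card n) : P = 1 := by
  have hQ : IsIdempotentElem (toLinAlgEquiv' (1 - P)) := hP.one_sub.map toLinAlgEquiv'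
  have hQ0 : toLinAlgEquiv' (1 - P) = 0 :=
    LinearMap.IsIdempotentElem.eq_zero_of_trace_eq_zero hQ
      ((trace_toLin'_eq (1 - P)).trans (by simp [htr]))
  exact (sub_eq_zero.mp ((map_eq_zero_iff _ toLinAlgEquiv'.injective).mp hQ0)).symm

theorem Matrix.map_one_of_trace {n K : Type*} [Fintype n] [DecidableEq n] [Field K] [CharZero K]
    {θ : Matrix n n K → Matrix n n K} (hθ : ∀ A B, θ (A * B) = θ A * θ B)
    (htr : (θ 1).trace = Fintype.card n) : θ 1 = 1 :=
  eq_one_of_isIdempotentElem_of_trace_eq (by rw [IsIdempotentElem, ← hθ, one_mul]) htr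

open scoped Norms.Operator in
theorem map_mexp {d : ℕ} (θ : Matrix (Fin d) (Fin d) ℂ →+* Matrix (Fin d) (Fin d) ℂ)
    (hθ : ∀ (r : ℝ) A, θ (r • A) = r • θ A) (X : Matrix (Fin d) (Fin d) ℂ) :
    θ (mexp X) = mexp (θ X) :=
  let θℝ : Matrix (Fin d) (Fin d) ℂ →ₗ[ℝ] Matrix (Fin d) (Fin d) ℂ :=
    { toFun := θ, map_add' := map_add θ, map_smul' := hθ }
  NormedSpace.map_exp θ θℝ.continuous_of_finiteDimensional X

section Majorana

variable {m d : ℕ} {c : Fin m → Matrix (Fin d) (Fin d) ℂ}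

theorem commute_of_mem_evenAlgebra {B : Finset (Fin m)} {n : ℕ} {a x : Matrix (Fin d) (Fin d) ℂ}
    (h : ∀ j ∈ B, SignCommute n a (c j)) (hx : x ∈ evenAlgebra c B) : Commute a x := by
  have hle : evenAlgebra c B ≤ Subalgebra.centralizer ℂ {a} := by
    refine Algebra.adjoin_le ?_
    rintro _ ⟨i, hi, j, hj, rfl⟩
    rw [SetLike.mem_coe, Subalgebra.mem_centralizer_iff]
    rintro _ rfl
    exact (((h i hi).mul_right (h j hj)).commute_of_even ⟨n, rfl⟩).eq
  exact (Subalgebra.mem_centralizer_iff ℂ).mp (hle hx) a rfl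

theorem commute_cliffordMonomial_right {a : Matrix (Fin d) (Fin d) ℂ} {β : Finset (Fin m)}
    (h : ∀ j ∈ β, Commute a (c j)) : Commute a (cliffordMonomial c β) :=
  Commute.list_prod_right _ _ fun _ hx => by
    obtain ⟨j, hj, rfl⟩ := List.mem_map.mp hx
    exact h j ((Finset.mem_sort _).mp hj)

theorem commute_cliffordMonomial_left {b : Matrix (Fin d) (Fin d) ℂ} {α : Finset (Fin m)}
    (h : ∀ i ∈ α, Commute (c i) b) : Commute (cliffordMonomial c α) b :=
  (commute_cliffordMonomial_right fun i hi => (h i hi).symm).symm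

theorem signCommute_cliffordMonomial {c' : Fin m → Matrix (Fin d) (Fin d) ℂ}
    {α β : Finset (Fin m)} (h : ∀ i ∈ α, ∀ j ∈ β, SignCommute 1 (c' i) (c j)) :
    SignCommute (α.card * β.card) (cliffordMonomial c' α) (cliffordMonomial c β) := by
  have hright : ∀ i ∈ α, SignCommute β.card (c' i) (cliffordMonomial c β) := fun i hi => by
    simpa [cliffordMonomial] using SignCommute.list_prod_right (β.sort (· ≤ ·)) c (fun _ => 1)
      fun j hj => h i hi j ((Finset.mem_sort _).mp hj)
  simpa [cliffordMonomial] using SignCommute.list_prod_left (α.sort (· ≤ ·)) c' (fun _ => β.card)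
    fun i hi => hright i ((Finset.mem_sort _).mp hi)

theorem map_cliffordMonomial (f : Matrix (Fin d) (Fin d) ℂ →+* Matrix (Fin d) (Fin d) ℂ)
    (β : Finset (Fin m)) : f (cliffordMonomial c β) = cliffordMonomial (f ∘ c) β := by
  simp [cliffordMonomial, map_list_prod, List.map_map]

end Majorana

theorem sign_identity_lemma_general
    (N : ℕ) (c : Fin (2 * N) → Matrix (Fin (2 ^ N)) (Fin (2 ^ N)) ℂ)
    (hClif : ∀ i j, c i * c j + c j * c i = if i = j then (2 : ℂ) • 1 else 0)
    (Λm Λp : Finset (Fin (2 * N))) (hdisj : Disjoint Λm Λp)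
    (ρ : Equiv.Perm (Fin (2 * N))) (hρ : ∀ j, ρ (ρ j) = j)
    (hρm : ∀ j ∈ Λm, ρ j ∈ Λp)
    (θ : Matrix (Fin (2 ^ N)) (Fin (2 ^ N)) ℂ → Matrix (Fin (2 ^ N)) (Fin (2 ^ N)) ℂ)
    (hθadd : ∀ A B, θ (A + B) = θ A + θ B)
    (hθsmul : ∀ (z : ℂ) A, θ (z • A) = (starRingEnd ℂ) z • θ A)
    (hθmul : ∀ A B, θ (A * B) = θ A * θ B)
    (hθtr : ∀ A, Matrix.trace (θ A) = (starRingEnd ℂ) (Matrix.trace A))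
    (hθc : ∀ j, θ (c j) = c (ρ j))
    (Hm : Matrix (Fin (2 ^ N)) (Fin (2 ^ N)) ℂ)
    (hHm : Hm ∈ evenAlgebra c Λm)
    (k : ℕ) (𝔍 : Fin k → Finset (Fin (2 * N))) (h𝔍 : ∀ i, 𝔍 i ⊆ Λm)
    (hEven : Even (∑ i, (𝔍 i).card)) :
    (List.ofFn fun i : Fin k =>
        cliffordMonomial c (𝔍 i) * θ (cliffordMonomial c (𝔍 i)) *
          mexp (-((k : ℂ)⁻¹ • Hm)) * mexp (-((k : ℂ)⁻¹ • θ Hm))).prod =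
      Complex.I ^ (-((∑ i, (𝔍 i).card % 2 : ℕ) : ℤ)) •
        ((List.ofFn fun i : Fin k =>
            cliffordMonomial c (𝔍 i) * mexp (-((k : ℂ)⁻¹ • Hm))).prod *
          θ (List.ofFn fun i : Fin k =>
            cliffordMonomial c (𝔍 i) * mexp (-((k : ℂ)⁻¹ • Hm))).prod) := by
  let Θ : Matrix (Fin (2 ^ N)) (Fin (2 ^ N)) ℂ →+* Matrix (Fin (2 ^ N)) (Fin (2 ^ N)) ℂ :=
    { toFun := θ, map_mul' := hθmul, map_add' := hθadd, map_zero' := by simpa using hθadd 0 0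
      map_one' := map_one_of_trace hθmul (by rw [hθtr, trace_one, map_natCast]) }
  have hΘ : ∀ A, Θ A = θ A := fun _ => rfl
  have hΘE : Θ (mexp (-((k : ℂ)⁻¹ • Hm))) = mexp (-((k : ℂ)⁻¹ • θ Hm)) := by
    rw [map_mexp Θ fun r A => by simpa [hΘ] using hθsmul r A, map_neg, hΘ, hθsmul, map_inv₀,
      map_natCast]
  have hanti : ∀ x ∈ Λp, ∀ y ∈ Λm, SignCommute 1 (c x) (c y) := fun x hx y hy => by
    have hxy : x ≠ y := fun hxy => Finset.disjoint_left.mp hdisj hy (hxy ▸ hx)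
    exact signCommute_one.mpr (by simpa [hxy] using hClif x y)
  have hcHm : ∀ y ∈ Λp, Commute (c y) Hm := fun y hy =>
    commute_of_mem_evenAlgebra (hanti y hy) hHm
  -- `c x = θ (c (ρ x))` with `ρ x ∈ Λp`, so this is the image under `θ` of `hcHm`.
  have hcθHm : ∀ x ∈ Λm, Commute (c x) (θ Hm) := fun x hx => by
    simpa [hΘ, hθc, hρ] using (hcHm (ρ x) (hρm x hx)).map Θ
  have hHmθHm : Commute (θ Hm) Hm :=
    commute_of_mem_evenAlgebra (fun j hj => signCommute_zero.mpr (hcθHm j hj).symm) hHm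
  have hΘM : ∀ i, Θ (cliffordMonomial c (𝔍 i)) = cliffordMonomial (c ∘ ρ) (𝔍 i) := fun i => by
    rw [map_cliffordMonomial, show ⇑Θ ∘ c = c ∘ ρ from funext hθc]
  have key := List.prod_ofFn_mul_map_of_signCommute Θ (fun i => cliffordMonomial c (𝔍 i))
    (mexp (-((k : ℂ)⁻¹ • Hm))) (fun i => (𝔍 i).card)
    (fun i j => hΘM i ▸ signCommute_cliffordMonomial fun x hx y hy =>
      hanti _ (hρm x (h𝔍 i hx)) y (h𝔍 j hy))
    (fun i => hΘM i ▸ commute_cliffordMonomial_left fun x hx =>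
      ((hcHm _ (hρm x (h𝔍 i hx))).smul_right _).neg_right.exp_right)
    (fun j => hΘE ▸ commute_cliffordMonomial_right fun y hy =>
      (((hcθHm y (h𝔍 j hy)).smul_right _).neg_right.exp_right).symm)
    (hΘE ▸ (((hHmθHm.smul_left _).smul_right _).neg_left.neg_right.exp))
  rw [hΘE, ← Int.cast_smul_eq_zsmul ℂ, Int.cast_pow, Int.cast_neg, Int.cast_one,
    Complex.neg_one_pow_esymm_two hEven, Multiset.map_map] at key
  simp only [hΘ] at key
  exact key

/-- Sign identity lemma: if `Σᵢ |𝔍ᵢ|` is even then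
`Y = i^(-Σᵢ σ(𝔍ᵢ)) D ϑ(D)` with `D = C_(𝔍₁) e^(-H₋/k) ⋯ C_(𝔍ₖ) e^(-H₋/k)`. -/
theorem sign_identity_lemma
    (N : ℕ) (c : Fin (2 * N) → Matrix (Fin (2 ^ N)) (Fin (2 ^ N)) ℂ)
    (hClif : ∀ i j, c i * c j + c j * c i = if i = j then (2 : ℂ) • 1 else 0)
    (hSA : ∀ i, (c i)ᴴ = c i)
    (Λm Λp : Finset (Fin (2 * N))) (hdisj : Disjoint Λm Λp)
    (hunion : Λm ∪ Λp = Finset.univ)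
    (ρ : Equiv.Perm (Fin (2 * N))) (hρ : ∀ j, ρ (ρ j) = j)
    (hρm : ∀ j ∈ Λm, ρ j ∈ Λp)
    (θ : Matrix (Fin (2 ^ N)) (Fin (2 ^ N)) ℂ → Matrix (Fin (2 ^ N)) (Fin (2 ^ N)) ℂ)
    (hθadd : ∀ A B, θ (A + B) = θ A + θ B)
    (hθsmul : ∀ (z : ℂ) A, θ (z • A) = (starRingEnd ℂ) z • θ A)
    (hθmul : ∀ A B, θ (A * B) = θ A * θ B)
    (hθstar : ∀ A, θ Aᴴ = (θ A)ᴴ)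
    (hθtr : ∀ A, Matrix.trace (θ A) = (starRingEnd ℂ) (Matrix.trace A))
    (hθc : ∀ j, θ (c j) = c (ρ j))
    (Hm : Matrix (Fin (2 ^ N)) (Fin (2 ^ N)) ℂ)
    (hHm : Hm ∈ evenAlgebra c Λm) (hHmsa : Hmᴴ = Hm)
    (k : ℕ) (𝔍 : Fin k → Finset (Fin (2 * N))) (h𝔍 : ∀ i, 𝔍 i ⊆ Λm)
    (hEven : Even (∑ i, (𝔍 i).card)) :
    (List.ofFn fun i : Fin k =>
        cliffordMonomial c (𝔍 i) * θ (cliffordMonomial c (𝔍 i)) *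
          mexp (-((k : ℂ)⁻¹ • Hm)) * mexp (-((k : ℂ)⁻¹ • θ Hm))).prod =
      Complex.I ^ (-((∑ i, (𝔍 i).card % 2 : ℕ) : ℤ)) •
        ((List.ofFn fun i : Fin k =>
            cliffordMonomial c (𝔍 i) * mexp (-((k : ℂ)⁻¹ • Hm))).prod *
          θ (List.ofFn fun i : Fin k =>
            cliffordMonomial c (𝔍 i) * mexp (-((k : ℂ)⁻¹ • Hm))).prod) :=
  sign_identity_lemma_general N c hClif Λm Λp hdisj ρ hρ hρm θ hθadd hθsmul hθmul hθtr hθc Hm hHm k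
    𝔍 h𝔍 hEven
end
end
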